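/- arXiv:2209.04925 — 2 statements merged into one kernel-verified Lean document; each statement's English description precedes it below -/
import Mathlib

section
/- Let G be a locally connected abelian topological group with G_e its identity component and T the closure of its torsion subgroup. Then the closure of the torsion subgroup of G_e equals G_e ∩ T. -/
theorem IsOpen.image_val_closure_preimage_val {X : Type*} [TopologicalSpace X] {U : Set X}
    (hU : IsOpen U) (s : Set X) :
    ((↑) : U → X) '' closure ((↑) ⁻¹' s) = U ∩ closure s := by
  rw [← hU.isOpenMap_subtype_val.preimage_closure_eq_closure_preimage continuous_subtype_val,
    Subtype.image_preimage_coe]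

theorem torsionClosure_of_identityComponent {G : Type*} [CommGroup G]
    [TopologicalSpace G] [IsTopologicalGroup G] [LocallyConnectedSpace G] :
    Subtype.val '' closure {x : connectedComponent (1 : G) | IsOfFinOrder (x : G)} =
      connectedComponent (1 : G) ∩
        ((CommGroup.torsion G).topologicalClosure : Set G) :=
  isOpen_connectedComponent.image_val_closure_preimage_val (CommGroup.torsion G : Set G)
end

section
/- Let G be a locally connected abelian topological group, T the closure of its torsion subgroup, and G_e its identity component. If G/(G_e + T) is torsion-free, then the image of T in π₀G = G/G_e equals the torsion subgroup of π₀G. -/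
/-!
Since `G_e` is open, every subgroup containing it is open, hence closed; so `T` lies in
`G_e + Tor(G)` and its image in `π₀G` consists of torsion elements. Conversely, a torsion element
of `π₀G` maps to a torsion element of `G/(G_e + T)`, which is trivial, so it lifts to `G_e + T`
and therefore comes from `T`.
-/

open QuotientGroup

namespace Subgroup

theorem topologicalClosure_le_sup_of_isOpen {G : Type*} [Group G] [TopologicalSpace G]
    [IsTopologicalGroup G] {H : Subgroup G} (hH : IsOpen (H : Set G)) (K : Subgroup G) :
    K.topologicalClosure ≤ H ⊔ K :=
  topologicalClosure_minimal K le_sup_right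
    ((H ⊔ K).isClosed_of_isOpen (isOpen_mono le_sup_left hH))

theorem map_mk'_sup_self_left {G : Type*} [Group G] (H : Subgroup G) [H.Normal]
    (K : Subgroup G) : (H ⊔ K).map (mk' H) = K.map (mk' H) := by
  rw [map_sup, map_mk'_self, bot_sup_eq]

end Subgroup

theorem CommGroup.torsion_le_map_mk'_of_torsionFree {G : Type*} [CommGroup G]
    (H K : Subgroup G) (htf : ∀ x : G ⧸ (H ⊔ K), IsOfFinOrder x → x = 1) :
    CommGroup.torsion (G ⧸ H) ≤ K.map (mk' H) := by
  intro x hx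
  obtain ⟨g, rfl⟩ := mk'_surjective H x
  have hg : IsOfFinOrder (mk' (H ⊔ K) g) :=
    (QuotientGroup.map H (H ⊔ K) (MonoidHom.id G) le_sup_left).isOfFinOrder hx
  rw [← Subgroup.map_mk'_sup_self_left]
  exact Subgroup.mem_map_of_mem _ ((eq_one_iff g).1 (htf _ hg))

theorem image_of_torsionClosure_in_pi0 {G : Type*} [CommGroup G]
    [TopologicalSpace G] [IsTopologicalGroup G] [LocallyConnectedSpace G]
    (Ge T : Subgroup G) (hGe : Ge = Subgroup.connectedComponentOfOne G)
    (hT : T = (CommGroup.torsion G).topologicalClosure)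
    (htf : ∀ x : G ⧸ (Ge ⊔ T), IsOfFinOrder x → x = 1) :
    Subgroup.map (QuotientGroup.mk' Ge) T = CommGroup.torsion (G ⧸ Ge) := by
  have hGe_open : IsOpen (Ge : Set G) := hGe ▸ isOpen_connectedComponent
  refine le_antisymm ?_ (CommGroup.torsion_le_map_mk'_of_torsionFree Ge T htf)
  calc T.map (mk' Ge)
      ≤ (Ge ⊔ CommGroup.torsion G).map (mk' Ge) :=
        Subgroup.map_mono (hT ▸ Subgroup.topologicalClosure_le_sup_of_isOpen hGe_open _)
    _ = (CommGroup.torsion G).map (mk' Ge) := Subgroup.map_mk'_sup_self_left _ _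
    _ ≤ CommGroup.torsion (G ⧸ Ge) := CommGroup.map_torsion_le _
end
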